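/- arXiv:2107.04300 — 6 statements merged into one kernel-verified Lean document; each statement's English description precedes it below -/
import Mathlib

section
/- Let α ∈ ℝ^m with α₁ > α₂ > ... > α_m. Then the permutahedron over α (the convex hull of all m! coordinate permutations of α) equals the set of x ∈ ℝ^m such that ∑ᵢ xᵢ = ∑ᵢ αᵢ and for every nonempty proper subset S of {1,...,m}, ∑_{c∈S} x_c ≥ ∑_{i=1}^{|S|} α_{m-i+1}. -/
/-!
A vertex `α ∘ π` satisfies Rado's inequalities because, for antitone `α`, the last `k` coordinates
have the smallest sum among all `k`-element index sets; the inequalities cut out a convex set, so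
the permutahedron lies inside it. Conversely, let `x` satisfy them and take a linear functional
`y ↦ ∑ cᵢ yᵢ`. Sorting `c` increasingly by `τ`, the functional at `x` minus its value at the vertex
`α ∘ τ⁻¹` is `∑ c_{τ j} (x_{τ j} - α_j)`; by Abel summation this is a nonnegative combination of the
tail sums `∑_{j ≥ k} (x_{τ j} - α_j)`, which the inequalities make nonnegative. So no hyperplane
separates `x` from the vertices, and `x` lies in their convex hull.
-/

/-- The permutahedron over a vector `p ∈ ℝ^m`: the convex hull of all
coordinate permutations of `p`, where a permutation `π` acts by
`(π(p))ᵢ = p (π i)`. -/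
noncomputable def permutahedron (m : ℕ) (p : Fin m → ℝ) : Set (Fin m → ℝ) :=
  convexHull ℝ {x | ∃ π : Equiv.Perm (Fin m), x = p ∘ π}

open Finset

section
variable {ι M : Type*} [LinearOrder ι] [AddCommMonoid M] [PartialOrder M] [IsOrderedAddMonoid M]

theorem Antitone.sum_le_sum_of_isUpperSet {f : ι → M} (hf : Antitone f) {s t : Finset ι}
    (ht : IsUpperSet (t : Set ι)) (hcard : #s = #t) : ∑ i ∈ t, f i ≤ ∑ i ∈ s, f i := by
  rcases (s \ t).eq_empty_or_nonempty with hst | hst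
  · rw [eq_of_subset_of_card_le (sdiff_eq_empty_iff_subset.1 hst) hcard.ge]
  set i₀ := (s \ t).max' hst
  have below : ∀ i ∈ s \ t, f i₀ ≤ f i := fun i hi => hf ((s \ t).le_max' i hi)
  have above : ∀ j ∈ t \ s, f j ≤ f i₀ := fun j hj => hf <| le_of_not_ge fun hji =>
    (mem_sdiff.1 ((s \ t).max'_mem hst)).2 (ht hji (mem_sdiff.1 hj).1)
  calc ∑ i ∈ t, f i ≤ ∑ i ∈ t ∩ s, f i + #(t \ s) • f i₀ := by
        grw [← sum_inter_add_sum_sdiff t s, sum_le_card_nsmul _ _ _ above]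
    _ = ∑ i ∈ s ∩ t, f i + #(s \ t) • f i₀ := by rw [inter_comm, card_sdiff_comm hcard.symm]
    _ ≤ ∑ i ∈ s, f i := by
        grw [← sum_inter_add_sum_sdiff s t, ← card_nsmul_le_sum _ _ _ below]
end

section
variable {ι R : Type*} [LinearOrder ι] [Semiring R] [PartialOrder R] [IsOrderedRing R]
  {d e : ι → R}

theorem mul_sum_le_sum_mul_of_sum_tail_nonneg (hd : Monotone d) (s : Finset ι)
    (htail : ∀ k ∈ s, 0 ≤ ∑ j ∈ s with k ≤ j, e j) {b : ι} (hb : ∀ j ∈ s, b ≤ j) :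
    d b * ∑ j ∈ s, e j ≤ ∑ j ∈ s, d j * e j := by
  classical
  induction s using Finset.induction_on_min generalizing b with
  | empty => simp
  | insert a s has ih =>
    have hmin : ∀ j ∈ insert a s, a ≤ j := by
      simp only [mem_insert, forall_eq_or_imp, le_refl, true_and]
      exact fun j hj => (has j hj).le
    have htotal : 0 ≤ ∑ j ∈ insert a s, e j := by
      simpa only [filter_true_of_mem hmin] using htail a (mem_insert_self a s)
    have htail' : ∀ k ∈ s, 0 ≤ ∑ j ∈ s with k ≤ j, e j := by
      intro k hk
      simpa only [filter_insert, if_neg (has k hk).not_ge] using htail k (mem_insert_of_mem hk)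
    have ha : a ∉ s := fun h => lt_irrefl a (has a h)
    calc d b * ∑ j ∈ insert a s, e j ≤ d a * ∑ j ∈ insert a s, e j :=
          mul_le_mul_of_nonneg_right (hd (hb a (mem_insert_self a s))) htotal
      _ = d a * e a + d a * ∑ j ∈ s, e j := by rw [sum_insert ha, mul_add]
      _ ≤ ∑ j ∈ insert a s, d j * e j := by
          rw [sum_insert ha]
          grw [ih htail' fun j hj => (has j hj).le]

theorem sum_mul_nonneg_of_sum_tail_nonneg (hd : Monotone d) (s : Finset ι)
    (htail : ∀ k ∈ s, 0 ≤ ∑ j ∈ s with k ≤ j, e j) (hsum : ∑ j ∈ s, e j = 0) :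
    0 ≤ ∑ j ∈ s, d j * e j := by
  rcases s.eq_empty_or_nonempty with rfl | hs
  · simp
  simpa [hsum] using mul_sum_le_sum_mul_of_sum_tail_nonneg hd s htail
    (b := s.min' hs) fun j hj => s.min'_le j hj
end

theorem mem_convexHull_of_forall_exists_le {E : Type*} [AddCommGroup E] [Module ℝ E]
    [TopologicalSpace E] [T2Space E] [IsTopologicalAddGroup E] [ContinuousSMul ℝ E]
    [LocallyConvexSpace ℝ E] {s : Set E} (hs : s.Finite) {x : E}
    (h : ∀ f : StrongDual ℝ E, ∃ y ∈ s, f y ≤ f x) : x ∈ convexHull ℝ s := by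
  by_contra hx
  obtain ⟨f, u, hfx, hf⟩ :=
    geometric_hahn_banach_point_closed (convex_convexHull ℝ s) (hs.isClosed_convexHull ℝ) hx
  obtain ⟨y, hy, hfy⟩ := h f
  linarith [hf y (subset_convexHull ℝ s hy)]

theorem Fin.card_filter_sub_le_val {m k : ℕ} (hk : k ≤ m) : #{i : Fin m | m - k ≤ i.val} = k := by
  have h := card_filter_add_card_filter_not (s := univ) fun i : Fin m => i.val < m - k
  simp only [not_lt, Fin.card_filter_val_lt, card_univ, Fintype.card_fin] at h
  omega

section Rado
variable {m : ℕ}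

def radoPolytope (α : Fin m → ℝ) : Set (Fin m → ℝ) :=
  {x | ∑ i, x i = ∑ i, α i ∧
    ∀ S : Finset (Fin m), ∑ i ∈ univ with m - #S ≤ i.val, α i ≤ ∑ c ∈ S, x c}

theorem convex_radoPolytope (α : Fin m → ℝ) : Convex ℝ (radoPolytope α) := by
  have hlin (S : Finset (Fin m)) : IsLinearMap ℝ fun x : Fin m → ℝ => ∑ c ∈ S, x c :=
    ⟨fun x y => sum_add_distrib, fun a x => (mul_sum S x a).symm⟩
  simp only [radoPolytope, Set.ofPred_and, Set.ofPred_forall]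
  exact (convex_hyperplane (hlin univ) _).inter
    (convex_iInter fun S => convex_halfSpace_ge (hlin S) _)

theorem comp_perm_mem_radoPolytope {α : Fin m → ℝ} (hα : Antitone α) (π : Equiv.Perm (Fin m)) :
    α ∘ π ∈ radoPolytope α := by
  refine ⟨Equiv.sum_comp π α, fun S => ?_⟩
  refine (hα.sum_le_sum_of_isUpperSet (s := S.map π.toEmbedding) (fun i j hij hi => ?_) ?_).trans_eq
    (sum_map S π.toEmbedding α)
  · simp only [coe_filter, mem_univ, true_and, Set.mem_ofPred_eq] at hi ⊢
    exact hi.trans hij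
  · rw [card_map, Fin.card_filter_sub_le_val (card_le_univ S |>.trans_eq (Fintype.card_fin m))]

theorem sum_tail_le_sum_tail_comp_perm {α x : Fin m → ℝ} (hx : x ∈ radoPolytope α)
    (τ : Equiv.Perm (Fin m)) (k : Fin m) :
    ∑ j ∈ univ with k ≤ j, α j ≤ ∑ j ∈ univ with k ≤ j, x (τ j) := by
  set T : Finset (Fin m) := {j | k ≤ j}
  have hT : T = ({j | m - (m - k) ≤ j.val} : Finset (Fin m)) := by
    ext j; simp only [T, mem_filter, mem_univ, true_and, Fin.le_def]; omega
  have hcard : #(T.map τ.toEmbedding) = m - k := by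
    rw [card_map, hT, Fin.card_filter_sub_le_val (Nat.sub_le m k)]
  have := hx.2 (T.map τ.toEmbedding)
  rwa [hcard, ← hT, sum_map, Equiv.coe_toEmbedding] at this

theorem exists_perm_sum_mul_le_of_mem_radoPolytope {α x : Fin m → ℝ} (hx : x ∈ radoPolytope α)
    (c : Fin m → ℝ) : ∃ π : Equiv.Perm (Fin m), ∑ i, c i * α (π i) ≤ ∑ i, c i * x i := by
  set τ := Tuple.sort c
  refine ⟨τ.symm, ?_⟩
  have hdiff : 0 ≤ ∑ j, c (τ j) * (x (τ j) - α j) := by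
    refine sum_mul_nonneg_of_sum_tail_nonneg (Tuple.monotone_sort c) univ (fun k _ => ?_) ?_
    · rw [sum_sub_distrib, sub_nonneg]
      exact sum_tail_le_sum_tail_comp_perm hx τ k
    · rw [sum_sub_distrib, Equiv.sum_comp τ x, hx.1, sub_self]
  rw [← Equiv.sum_comp τ, ← Equiv.sum_comp τ (fun i => c i * x i)]
  simp only [Equiv.symm_apply_apply, mul_sub, sum_sub_distrib, sub_nonneg] at hdiff ⊢
  exact hdiff

theorem radoPolytope_subset_permutahedron (α : Fin m → ℝ) :
    radoPolytope α ⊆ permutahedron m α := by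
  intro x hx
  have hfin : {y | ∃ π : Equiv.Perm (Fin m), y = α ∘ π}.Finite :=
    (Set.finite_range fun π : Equiv.Perm (Fin m) => α ∘ π).subset <| by
      rintro y ⟨π, rfl⟩
      exact ⟨π, rfl⟩
  refine mem_convexHull_of_forall_exists_le hfin fun f => ?_
  obtain ⟨π, hπ⟩ := exists_perm_sum_mul_le_of_mem_radoPolytope hx
    fun i => f fun j => if i = j then 1 else 0
  refine ⟨α ∘ π, ⟨π, rfl⟩, ?_⟩
  have hf (y : Fin m → ℝ) : f y = ∑ i, y i • f fun j => if i = j then 1 else 0 :=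
    f.toLinearMap.pi_apply_eq_sum_univ y
  rw [hf, hf]
  simpa [mul_comm] using hπ

theorem mem_radoPolytope_iff {α x : Fin m → ℝ} :
    x ∈ radoPolytope α ↔ (∑ i, x i = ∑ i, α i) ∧ ∀ S : Finset (Fin m), S.Nonempty → S ≠ univ →
      ∑ c ∈ S, x c ≥ ∑ i ∈ univ with m - #S ≤ i.val, α i := by
  refine and_congr_right fun hsum => ⟨fun h S _ _ => h S, fun h S => ?_⟩
  rcases S.eq_empty_or_nonempty with rfl | hne
  · simp [filter_false_of_mem fun (i : Fin m) _ => i.isLt.not_ge]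
  by_cases huniv : S = univ
  · simp [huniv, hsum]
  exact h S hne huniv

theorem permutahedron_subset_radoPolytope {α : Fin m → ℝ} (hα : Antitone α) :
    permutahedron m α ⊆ radoPolytope α :=
  convexHull_min (by rintro _ ⟨π, rfl⟩; exact comp_perm_mem_radoPolytope hα π)
    (convex_radoPolytope α)

theorem permutahedron_eq_radoPolytope {α : Fin m → ℝ} (hα : Antitone α) :
    permutahedron m α = radoPolytope α :=
  (permutahedron_subset_radoPolytope hα).antisymm (radoPolytope_subset_permutahedron α)

end Rado

/-- Rado's theorem: for `α₁ > α₂ > ⋯ > α_m`, the permutahedron over `α` is the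
set of `x` with `∑ xᵢ = ∑ αᵢ` and, for every nonempty proper subset `S`,
`∑_{c ∈ S} x_c` at least the sum of the `|S|` smallest coordinates of `α`. -/
theorem rado (m : ℕ) (α : Fin m → ℝ)
    (hdec : ∀ i j : Fin m, i < j → α j < α i) :
    permutahedron m α =
      {x : Fin m → ℝ |
        (∑ i, x i = ∑ i, α i) ∧
        ∀ S : Finset (Fin m), S.Nonempty → S ≠ Finset.univ →
          ∑ c ∈ S, x c ≥
            ∑ i ∈ Finset.univ.filter (fun i : Fin m => m - S.card ≤ i.val), α i} := by
  rw [permutahedron_eq_radoPolytope (StrictAnti.antitone hdec)]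
  exact Set.ext fun _ => mem_radoPolytope_iff
end

section
/- Let 0 < ε < 1/3, ρ ≥ ε^k, and x ∈ Π_ε(ρ,k,m). Suppose for distinct coordinates c and c' we have x_c > 2ε·x_{c'}. Then there exists δ > 0 such that x + δ(e_{c'} − e_c) ∈ Π_ε(ρ,k,m), where e_i denotes the i-th standard unit vector. -/
/-!
Write `x` as a convex combination `∑ wᵢ zᵢ` of permutations `zᵢ` of `p_ε`. In every `zᵢ` with
`zᵢ c' < zᵢ c`, swap these two coordinates: this is again a permutation of `p_ε`, and it moves
mass `zᵢ c - zᵢ c'` from `c` to `c'`, so the new combination is `x + δ (e_{c'} - e_c)` with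
`δ = ∑ wᵢ max (zᵢ c - zᵢ c') 0`. If `δ` were `0`, every `zᵢ` with `wᵢ > 0` would have
`zᵢ c ≤ zᵢ c'`; since consecutive coordinates of `p_ε` decay by a factor at most `2ε < 1`, this
forces `zᵢ c ≤ 2ε zᵢ c'`, and averaging contradicts `x c > 2ε x c'`.
-/

/-- The vector `p_ε(ρ,k,m) ∈ ℝ^m` with first coordinate
`ρ − (ε^{k+1} + ⋯ + ε^{k+m−1})` and `i`-th coordinate `ε^{k+i−1}` for `i > 1`
(here indexed from `0`). -/
noncomputable def pEps (ρ ε : ℝ) (k m : ℕ) : Fin m → ℝ :=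
  fun i => if i.val = 0 then ρ - ∑ j ∈ Finset.range (m - 1), ε ^ (k + 1 + j)
           else ε ^ (k + i.val)

/-- The ε-permutahedron `Π_ε(ρ,k,m)`. -/
noncomputable def PiEps (ρ ε : ℝ) (k m : ℕ) : Set (Fin m → ℝ) :=
  permutahedron m (pEps ρ ε k m)

section SwapMass

variable {𝕜 ι : Type*} [DecidableEq ι]

lemma comp_swap_eq_add_smul_single_sub_single [CommRing 𝕜] (z : ι → 𝕜) (c c' : ι) :
    z ∘ Equiv.swap c c' = z + (z c - z c') • (Pi.single c' 1 - Pi.single c 1) := by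
  rcases eq_or_ne c c' with rfl | hcc'
  · simp
  funext j
  rw [Function.comp_apply, Equiv.swap_apply_def]
  split_ifs <;> simp_all

variable [Field 𝕜] [LinearOrder 𝕜] [IsStrictOrderedRing 𝕜]

lemma exists_pos_add_smul_single_sub_single_mem_convexHull {S : Set (ι → 𝕜)} {r : 𝕜}
    {c c' : ι} (hswap : ∀ z ∈ S, z ∘ Equiv.swap c c' ∈ S)
    (hgap : ∀ z ∈ S, z c ≤ z c' → z c ≤ r * z c')
    {x : ι → 𝕜} (hx : x ∈ convexHull 𝕜 S) (hbig : r * x c' < x c) :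
    ∃ δ : 𝕜, 0 < δ ∧ x + δ • (Pi.single c' 1 - Pi.single c 1) ∈ convexHull 𝕜 S := by
  obtain ⟨κ, _, w, z, hw0, hw1, hz, rfl⟩ := mem_convexHull_iff_exists_fintype.1 hx
  set v : ι → 𝕜 := Pi.single c' 1 - Pi.single c 1
  set d : κ → 𝕜 := fun i => max (z i c - z i c') 0
  have hd0 (i : κ) : 0 ≤ w i * d i := mul_nonneg (hw0 i) (le_max_right _ _)
  have hmoved (i : κ) : z i + d i • v ∈ S := by
    rcases lt_or_ge (z i c') (z i c) with hlt | hle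
    · rw [show d i = z i c - z i c' from max_eq_left (sub_nonneg.2 hlt.le),
        ← comp_swap_eq_add_smul_single_sub_single]
      exact hswap _ (hz i)
    · simpa [d, max_eq_right (sub_nonpos.2 hle)] using hz i
  refine ⟨∑ i, w i * d i, ?_, mem_convexHull_of_exists_fintype w _ hw0 hw1 hmoved ?_⟩
  · by_contra! hδ
    have hwd := (Finset.sum_eq_zero_iff_of_nonneg fun i _ => hd0 i).1
      (le_antisymm hδ (Finset.sum_nonneg fun i _ => hd0 i))
    have hle (i : κ) : w i * z i c ≤ r * (w i * z i c') := by
      rcases mul_eq_zero.1 (hwd i (Finset.mem_univ i)) with hw | hdi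
      · simp [hw]
      · have := hgap _ (hz i) (sub_nonpos.1 (max_eq_right_iff.1 hdi))
        nlinarith [hw0 i]
    have := Finset.sum_le_sum fun i (_ : i ∈ Finset.univ) => hle i
    rw [← Finset.mul_sum] at this
    simp only [Finset.sum_apply, Pi.smul_apply, smul_eq_mul] at hbig
    linarith
  · simp only [smul_add, smul_smul, Finset.sum_add_distrib, ← Finset.sum_smul]

lemma exists_pos_add_smul_single_sub_single_mem_convexHull_perm {p : ι → 𝕜} {r : 𝕜}
    (hp : ∀ a b, a ≠ b → p a ≤ p b → p a ≤ r * p b)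
    {c c' : ι} (hcc' : c ≠ c') {x : ι → 𝕜}
    (hx : x ∈ convexHull 𝕜 {y | ∃ π : Equiv.Perm ι, y = p ∘ π}) (hbig : r * x c' < x c) :
    ∃ δ : 𝕜, 0 < δ ∧ x + δ • (Pi.single c' 1 - Pi.single c 1) ∈
      convexHull 𝕜 {y | ∃ π : Equiv.Perm ι, y = p ∘ π} := by
  refine exists_pos_add_smul_single_sub_single_mem_convexHull ?_ ?_ hx hbig
  · rintro _ ⟨π, rfl⟩
    exact ⟨(Equiv.swap c c').trans π, rfl⟩
  · rintro _ ⟨π, rfl⟩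
    exact hp _ _ (π.injective.ne hcc')

end SwapMass

section GeometricDecay

variable {𝕜 : Type*} [CommRing 𝕜] [LinearOrder 𝕜] [IsStrictOrderedRing 𝕜] {m : ℕ}
  {p : Fin m → 𝕜} {r : 𝕜}

lemma Fin.apply_le_mul_of_lt (hp : ∀ i, 0 ≤ p i) (hr : r ≤ 1)
    (hstep : ∀ i j : Fin m, (j : ℕ) = i + 1 → p j ≤ r * p i) {a b : Fin m} (hba : b < a) :
    p a ≤ r * p b := by
  rw [Fin.lt_def] at hba
  obtain ⟨n, hn⟩ : ∃ n, (a : ℕ) = b + 1 + n := ⟨a - (b + 1), by omega⟩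
  induction n generalizing a with
  | zero => exact hstep b a hn
  | succ n ih =>
    let a' : Fin m := ⟨a - 1, by omega⟩
    calc p a ≤ r * p a' := hstep a' a (by simp only [a']; omega)
      _ ≤ p a' := by nlinarith [hp a']
      _ ≤ r * p b := ih (by simp only [a']; omega) (by simp only [a']; omega)

lemma Fin.apply_le_mul_of_apply_le (hp : ∀ i, 0 < p i) (hr : r < 1)
    (hstep : ∀ i j : Fin m, (j : ℕ) = i + 1 → p j ≤ r * p i) (a b : Fin m) (hab : a ≠ b)
    (hle : p a ≤ p b) : p a ≤ r * p b := by
  rcases hab.lt_or_gt with hab | hba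
  · have := Fin.apply_le_mul_of_lt (fun i => (hp i).le) hr.le hstep hab
    nlinarith [hp a]
  · exact Fin.apply_le_mul_of_lt (fun i => (hp i).le) hr.le hstep hba

end GeometricDecay

section pEps

variable {ρ ε : ℝ} {k m : ℕ}

lemma sum_range_pow_le_pow_div_two (hε0 : 0 < ε) (hε : ε ≤ 1 / 3) (k n : ℕ) :
    ∑ j ∈ Finset.range n, ε ^ (k + 1 + j) ≤ ε ^ k / 2 := by
  have hgeom : ∑ j ∈ Finset.range n, ε ^ j ≤ 1 / (1 - ε) := by
    have := geom_sum_Ico_le_of_lt_one (m := 0) (n := n) hε0.le (by linarith : ε < 1)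
    rwa [← Finset.range_eq_Ico, pow_zero] at this
  calc ∑ j ∈ Finset.range n, ε ^ (k + 1 + j) = ε ^ (k + 1) * ∑ j ∈ Finset.range n, ε ^ j := by
        simp only [Finset.mul_sum, pow_add]
    _ ≤ ε ^ (k + 1) * (1 / (1 - ε)) := mul_le_mul_of_nonneg_left hgeom (by positivity)
    _ ≤ ε ^ k / 2 := by
        rw [mul_one_div, div_le_div_iff₀ (by linarith) two_pos, pow_succ]
        nlinarith [pow_pos hε0 k]

lemma pow_div_two_le_pEps (hε0 : 0 < ε) (hε : ε ≤ 1 / 3) (hρ : ε ^ k ≤ ρ) {i : Fin m}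
    (hi : (i : ℕ) = 0) : ε ^ k / 2 ≤ pEps ρ ε k m i := by
  rw [pEps, if_pos hi]
  linarith [sum_range_pow_le_pow_div_two hε0 hε k (m - 1)]

lemma pEps_pos (hε0 : 0 < ε) (hε : ε ≤ 1 / 3) (hρ : ε ^ k ≤ ρ) (i : Fin m) :
    0 < pEps ρ ε k m i := by
  by_cases hi : (i : ℕ) = 0
  · linarith [pow_div_two_le_pEps hε0 hε hρ hi, pow_pos hε0 k]
  · rw [pEps, if_neg hi]
    positivity

lemma pEps_le_two_mul_pEps (hε0 : 0 < ε) (hε : ε ≤ 1 / 3) (hρ : ε ^ k ≤ ρ) (i j : Fin m)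
    (hij : (j : ℕ) = i + 1) : pEps ρ ε k m j ≤ 2 * ε * pEps ρ ε k m i := by
  have hj : pEps ρ ε k m j = ε ^ (k + i) * ε := by
    rw [pEps, if_neg (by omega), hij, ← pow_succ, add_assoc]
  by_cases hi : (i : ℕ) = 0
  · have := pow_div_two_le_pEps hε0 hε hρ hi
    rw [hj, hi, add_zero]
    nlinarith
  · rw [hj, pEps, if_neg hi]
    nlinarith [pow_pos hε0 (k + i)]

end pEps

/-- If `x ∈ Π_ε(ρ,k,m)` and `x_c > 2ε·x_{c'}` for distinct `c, c'`, then some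
positive mass `δ` can be moved from coordinate `c` to coordinate `c'` while
staying inside `Π_ε(ρ,k,m)`. -/
theorem move_mass_within_PiEps (ρ ε : ℝ) (k m : ℕ)
    (hε0 : 0 < ε) (hε : ε < 1 / 3) (hρ : ε ^ k ≤ ρ)
    (x : Fin m → ℝ) (hx : x ∈ PiEps ρ ε k m)
    (c c' : Fin m) (hcc' : c ≠ c') (hbig : x c > 2 * ε * x c') :
    ∃ δ : ℝ, 0 < δ ∧
      (fun j => x j + δ * ((Pi.single c' 1 : Fin m → ℝ) j - (Pi.single c 1 : Fin m → ℝ) j))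
        ∈ PiEps ρ ε k m := by
  have hgap := Fin.apply_le_mul_of_apply_le (pEps_pos (m := m) hε0 hε.le hρ) (by linarith)
    (pEps_le_two_mul_pEps hε0 hε.le hρ)
  exact exists_pos_add_smul_single_sub_single_mem_convexHull_perm hgap hcc' hx hbig
end

section
/- Let x ∈ Π_ε(ρ,k,m) with 0 < ε ≤ 1/2 and ρ > max(ε^k, 2m·ε^{k+1}). Let c be a coordinate with x_c ≥ x_{c'} for all c'. Then x − δ·e_c ∈ Π_ε(ρ−δ,k,m) for any 0 < δ ≤ min(ρ − ε^k, ρ/m − 2ε^{k+1}). -/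
/-!
For antitone `p`, Rado's theorem describes the permutahedron of `p` by `∑ y = ∑ p` and
`∑_{i ∈ S} y i ≤ p 0 + ⋯ + p (#S - 1)` for all `S`; sufficiency of these inequalities holds for
every `p` (separate by a hyperplane, sort the normal vector and sum by parts). Lowering the first
entry of `p` and a largest coordinate of `y` by the same `δ` keeps all these inequalities, as long as
the lowered coordinate still dominates the other entries of `p`; for `pEps` those entries are at most
`ε ^ (k + 1)`, while the largest coordinate of `x` is at least the mean `ρ / m`.
-/

open Finset

lemma sum_mul_nonneg_of_antitone_of_nonneg :
    ∀ {n : ℕ} {A d : Fin n → ℝ}, Antitone A → (∀ i, 0 ≤ A i) →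
      (∀ i, 0 ≤ ∑ j ∈ Iic i, d j) → 0 ≤ ∑ i, A i * d i
  | 0, _, _, _, _, _ => by simp
  | n + 1, A, d, hA, hA0, hd => by
    have hsplit : ∑ i, A i * d i =
        ∑ i : Fin n, (A i.castSucc - A (Fin.last n)) * d i.castSucc
          + A (Fin.last n) * ∑ i, d i := by
      simp only [Fin.sum_univ_castSucc, sub_mul, sum_sub_distrib, mul_add, mul_sum]
      ring
    have htotal : 0 ≤ ∑ i, d i := by simpa [← Fin.top_eq_last, Iic_top] using hd (Fin.last n)
    rw [hsplit]
    exact add_nonneg (sum_mul_nonneg_of_antitone_of_nonneg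
      (fun i j hij => sub_le_sub_right (hA (Fin.castSucc_le_castSucc_iff.2 hij)) _)
      (fun i => sub_nonneg.2 (hA (Fin.le_last _)))
      (fun i => Fin.sum_Iic_castSucc d i ▸ hd i.castSucc)) (mul_nonneg (hA0 _) htotal)

lemma sum_mul_nonneg_of_antitone {m : ℕ} {A d : Fin m → ℝ} (hA : Antitone A)
    (hd : ∀ i, 0 ≤ ∑ j ∈ Iic i, d j) (hsum : ∑ i, d i = 0) : 0 ≤ ∑ i, A i * d i := by
  cases m with
  | zero => simp
  | succ n =>
    have := sum_mul_nonneg_of_antitone_of_nonneg (A := fun i => A i - A (Fin.last n))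
      (fun i j hij => sub_le_sub_right (hA hij) _) (fun i => sub_nonneg.2 (hA (Fin.le_last i))) hd
    simpa [sub_mul, sum_sub_distrib, ← mul_sum, hsum] using this

noncomputable def headSum {m : ℕ} (p : Fin m → ℝ) (t : ℕ) : ℝ :=
  ∑ i : Fin m with i.val < t, p i

section headSum

variable {m : ℕ} (p : Fin m → ℝ)

lemma headSum_zero : headSum p 0 = 0 := by simp [headSum]

lemma headSum_succ {t : ℕ} (ht : t < m) : headSum p (t + 1) = headSum p t + p ⟨t, ht⟩ := by
  have : univ.filter (fun i : Fin m => i.val < t + 1) =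
      insert ⟨t, ht⟩ (univ.filter fun i : Fin m => i.val < t) := by
    ext i
    simp only [Order.lt_add_one_iff, mem_filter, mem_univ, true_and, mem_insert, Fin.ext_iff]
    omega
  rw [headSum, this, sum_insert (by simp), headSum, add_comm]

lemma headSum_succ_eq_sum_Iic (i : Fin m) : headSum p (i + 1) = ∑ j ∈ Iic i, p j := by
  have : univ.filter (fun j : Fin m => j.val < i.val + 1) = Iic i := by
    ext j
    simp only [mem_filter, mem_univ, true_and, mem_Iic, Fin.le_iff_val_le_val]
    omega
  rw [headSum, this]

lemma headSum_sub_single_zero [NeZero m] {t : ℕ} (ht : 0 < t) (δ : ℝ) :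
    headSum (p - Pi.single 0 δ) t = headSum p t - δ := by
  simp [headSum, sum_sub_distrib, ht]

lemma sum_le_headSum_of_antitone (hp : Antitone p) (T : Finset (Fin m)) :
    ∑ i ∈ T, p i ≤ headSum p #T := by
  set U := univ.filter fun i : Fin m => i.val < #T
  have hcard : #(T \ U) = #(U \ T) := by
    refine card_sdiff_comm ?_
    rw [Fin.card_filter_val_lt, min_eq_right (card_le_univ T |>.trans_eq (Fintype.card_fin m))]
  suffices ∑ i ∈ T \ U, p i ≤ ∑ i ∈ U \ T, p i by
    have := sum_sdiff_sub_sum_sdiff (s₁ := U) (s₂ := T) (f := p)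
    rw [headSum]
    linarith
  rcases (T \ U).eq_empty_or_nonempty with hempty | hne
  · rw [hempty, card_empty, eq_comm, card_eq_zero] at hcard
    simp [hempty, hcard]
  · -- every index of `T \ U` lies above every index of `U \ T`
    set i₀ := (T \ U).min' hne
    have hi₀ : #T ≤ (i₀ : ℕ) := by simpa [U] using (mem_sdiff.1 (min'_mem _ hne)).2
    calc ∑ i ∈ T \ U, p i ≤ #(T \ U) • p i₀ :=
          sum_le_card_nsmul _ _ _ fun i hi => hp (min'_le _ _ hi)
      _ = #(U \ T) • p i₀ := by rw [hcard]
      _ ≤ ∑ i ∈ U \ T, p i := card_nsmul_le_sum _ _ _ fun j hj => hp <| by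
          have : (j : ℕ) < #T := by simpa [U] using (mem_sdiff.1 hj).1
          exact Fin.le_iff_val_le_val.2 (by omega)

end headSum

section Permutahedron

lemma isClosed_permutahedron {m : ℕ} (p : Fin m → ℝ) : IsClosed (permutahedron m p) :=
  Set.Finite.isClosed_convexHull (𝕜 := ℝ) <|
    (Set.finite_range fun π : Equiv.Perm (Fin m) => p ∘ π).subset
      (by rintro _ ⟨π, rfl⟩; exact ⟨π, rfl⟩)

variable {m : ℕ} {p y : Fin m → ℝ}

lemma sum_eq_of_mem_permutahedron (hy : y ∈ permutahedron m p) : ∑ i, y i = ∑ i, p i := by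
  refine convexHull_min (t := {z | ∑ i, z i = ∑ i, p i}) ?_ (convex_hyperplane (𝕜 := ℝ) ?_ _) hy
  · rintro _ ⟨π, rfl⟩
    exact Equiv.sum_comp π p
  · exact ⟨fun y z => sum_add_distrib, fun c y => by simp [mul_sum]⟩

lemma sum_le_headSum_of_mem_permutahedron (hp : Antitone p) (hy : y ∈ permutahedron m p)
    (S : Finset (Fin m)) : ∑ i ∈ S, y i ≤ headSum p #S := by
  refine convexHull_min (t := {z | ∑ i ∈ S, z i ≤ headSum p #S}) ?_
    (convex_halfSpace_le (𝕜 := ℝ) ?_ _) hy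
  · rintro _ ⟨π, rfl⟩
    simpa [sum_map, card_map] using sum_le_headSum_of_antitone p hp (S.map π.toEmbedding)
  · exact ⟨fun y z => sum_add_distrib, fun c y => by simp [mul_sum]⟩

lemma mem_permutahedron_of_sum_le_headSum (hsum : ∑ i, y i = ∑ i, p i)
    (hhead : ∀ S : Finset (Fin m), ∑ i ∈ S, y i ≤ headSum p #S) : y ∈ permutahedron m p := by
  by_contra hy
  obtain ⟨f, u, hfu, hfy⟩ :=
    geometric_hahn_banach_closed_point (convex_convexHull ℝ _) (isClosed_permutahedron p) hy
  set a : Fin m → ℝ := fun i => f fun j => if i = j then 1 else 0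
  have hf : ∀ z, f z = ∑ i, a i * z i := fun z => by
    simpa [a, mul_comm] using f.toLinearMap.pi_apply_eq_sum_univ z
  -- order the coordinates by decreasing `a` and put the largest entries of `p` there
  set σ := Tuple.sort (-a)
  have hA : Antitone (a ∘ σ) := fun i j hij => neg_le_neg_iff.1 (Tuple.monotone_sort (-a) hij)
  have hv : p ∘ σ.symm ∈ permutahedron m p := subset_convexHull ℝ _ ⟨σ.symm, rfl⟩
  have hle : f y ≤ f (p ∘ σ.symm) := by
    rw [hf, hf, ← sub_nonneg, ← Equiv.sum_comp σ, ← Equiv.sum_comp σ (fun i => a i * _),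
      ← sum_sub_distrib]
    simp only [Function.comp_apply, Equiv.symm_apply_apply, ← mul_sub]
    refine sum_mul_nonneg_of_antitone hA (fun i => ?_) ?_
    · have := hhead ((Iic i).map σ.toEmbedding)
      rw [sum_map, card_map, Fin.card_Iic, headSum_succ_eq_sum_Iic] at this
      simpa [sum_sub_distrib] using this
    · rw [sum_sub_distrib, Equiv.sum_comp σ y, hsum, sub_self]
  linarith [hfu _ hv]

end Permutahedron

lemma sub_single_mem_permutahedron {m : ℕ} [NeZero m] {p y : Fin m → ℝ} (hp : Antitone p)
    (hy : y ∈ permutahedron m p) {c : Fin m} {δ : ℝ} (hc : ∀ i ≠ 0, p i ≤ y c - δ) :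
    y - Pi.single c δ ∈ permutahedron m (p - Pi.single 0 δ) := by
  refine mem_permutahedron_of_sum_le_headSum ?_ fun S => ?_
  · simp [sum_sub_distrib, sum_eq_of_mem_permutahedron hy]
  by_cases hcS : c ∈ S
  · have hS : 0 < #S := card_pos.2 ⟨c, hcS⟩
    simpa [sum_sub_distrib, hcS, headSum_sub_single_zero p hS]
      using sum_le_headSum_of_mem_permutahedron hp hy S
  rcases S.eq_empty_or_nonempty with rfl | hne
  · simp [headSum_zero]
  -- adding `c` to `S` adds `y c` to the sum but only `p #S ≤ y c - δ` to the bound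
  have hSm : #S < m := (card_lt_univ_of_notMem hcS).trans_eq (Fintype.card_fin m)
  have hinsert := sum_le_headSum_of_mem_permutahedron hp hy (insert c S)
  rw [sum_insert hcS, card_insert_of_notMem hcS, headSum_succ p hSm] at hinsert
  have hnext := hc ⟨#S, hSm⟩ (Fin.ne_of_val_ne (card_pos.2 hne).ne')
  simp only [Pi.sub_apply, sum_sub_distrib, sum_pi_single', hcS, if_false, sub_zero,
    headSum_sub_single_zero p (card_pos.2 hne)]
  linarith

section pEps

variable (ρ ε : ℝ) (k m : ℕ)

lemma sum_pEps [NeZero m] : ∑ i, pEps ρ ε k m i = ρ := by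
  obtain ⟨n, rfl⟩ : ∃ n, m = n + 1 := Nat.exists_eq_succ_of_ne_zero (NeZero.ne m)
  simp only [Fin.sum_univ_succ, pEps, Fin.val_zero, Fin.val_succ, if_true, Nat.add_sub_cancel,
    Nat.succ_ne_zero, if_false, Fin.sum_univ_eq_sum_range (fun j => ε ^ (k + (j + 1))) n]
  simp_rw [← add_assoc, Nat.add_right_comm k _ 1]
  ring

lemma pEps_sub_eq [NeZero m] (δ : ℝ) : pEps (ρ - δ) ε k m = pEps ρ ε k m - Pi.single 0 δ := by
  ext i
  by_cases hi : i = 0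
  · subst hi
    simp [pEps, sub_right_comm]
  · simp [pEps, hi, Fin.val_eq_zero_iff]

variable {ρ ε k m}

lemma pEps_of_ne_zero [NeZero m] {i : Fin m} (hi : i ≠ 0) : pEps ρ ε k m i = ε ^ (k + i) := by
  simp [pEps, hi]

lemma antitone_pEps (hε0 : 0 ≤ ε) (hε1 : ε ≤ 1) (hρ : m * ε ^ (k + 1) ≤ ρ) :
    Antitone (pEps ρ ε k m) := by
  intro i j hij
  have hpow : ∀ {a b : ℕ}, a ≤ b → ε ^ b ≤ ε ^ a := fun h => pow_le_pow_of_le_one hε0 hε1 h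
  have hm : 1 ≤ m := i.pos
  have htail : ∑ r ∈ range (m - 1), ε ^ (k + 1 + r) ≤ (m - 1) * ε ^ (k + 1) := by
    simpa [Nat.cast_sub hm] using
      sum_le_card_nsmul (range (m - 1)) _ _ fun r _ => hpow (Nat.le_add_right (k + 1) r)
  simp only [pEps]
  split_ifs with hj hi hi
  · exact le_rfl
  · omega
  · nlinarith [hpow (show k + 1 ≤ k + j from by omega)]
  · exact hpow (by omega)

end pEps

theorem remove_mass_PiEps_general (ρ ε : ℝ) (k m : ℕ)
    (hε0 : 0 < ε) (hε : ε ≤ 1 / 2)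
    (hρ : ρ > max (ε ^ k) (2 * m * ε ^ (k + 1)))
    (x : Fin m → ℝ) (hx : x ∈ PiEps ρ ε k m)
    (c : Fin m) (hc : ∀ c' : Fin m, x c' ≤ x c)
    (δ : ℝ) (hδ : δ ≤ min (ρ - ε ^ k) (ρ / m - 2 * ε ^ (k + 1))) :
    (fun j => x j - δ * (Pi.single c 1 : Fin m → ℝ) j) ∈ PiEps (ρ - δ) ε k m := by
  have : NeZero m := NeZero.of_pos c.pos
  have hm : (0 : ℝ) < m := Nat.cast_pos.2 c.pos
  have hpow : 0 ≤ ε ^ (k + 1) := by positivity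
  have hρm : 2 * m * ε ^ (k + 1) < ρ := (le_max_right _ _).trans_lt hρ
  have hmean : ρ / m ≤ x c := by
    rw [div_le_iff₀ hm]
    calc ρ = ∑ i, x i := ((sum_eq_of_mem_permutahedron hx).trans (sum_pEps ρ ε k m)).symm
      _ ≤ ∑ _i : Fin m, x c := sum_le_sum fun i _ => hc i
      _ = x c * m := by simp [mul_comm]
  have hδc : δ ≤ x c - 2 * ε ^ (k + 1) := by linarith [hδ.trans (min_le_right _ _)]
  have hfun : (fun j => x j - δ * (Pi.single c 1 : Fin m → ℝ) j) = x - Pi.single c δ := by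
    ext j
    simp [Pi.single_apply]
  unfold PiEps at hx ⊢
  rw [hfun, pEps_sub_eq]
  refine sub_single_mem_permutahedron (antitone_pEps hε0.le (by linarith) (by nlinarith)) hx
    fun i hi => ?_
  have hi' : 1 ≤ (i : ℕ) := (Fin.pos_iff_ne_zero' i).2 hi
  rw [pEps_of_ne_zero hi]
  nlinarith [pow_le_pow_of_le_one hε0.le (by linarith : ε ≤ 1) (show k + 1 ≤ k + i by omega)]

/-- If `x ∈ Π_ε(ρ,k,m)` with `0 < ε ≤ 1/2` and `ρ > max(ε^k, 2m·ε^{k+1})`,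
and `c` is a coordinate of maximal value, then `x − δ·e_c ∈ Π_ε(ρ−δ,k,m)`
for any `0 < δ ≤ min(ρ − ε^k, ρ/m − 2ε^{k+1})`. -/
theorem remove_mass_PiEps (ρ ε : ℝ) (k m : ℕ)
    (hε0 : 0 < ε) (hε : ε ≤ 1 / 2)
    (hρ : ρ > max (ε ^ k) (2 * m * ε ^ (k + 1)))
    (x : Fin m → ℝ) (hx : x ∈ PiEps ρ ε k m)
    (c : Fin m) (hc : ∀ c' : Fin m, x c' ≤ x c)
    (δ : ℝ) (hδ0 : 0 < δ) (hδ : δ ≤ min (ρ - ε ^ k) (ρ / m - 2 * ε ^ (k + 1))) :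
    (fun j => x j - δ * (Pi.single c 1 : Fin m → ℝ) j) ∈ PiEps (ρ - δ) ε k m :=
  remove_mass_PiEps_general ρ ε k m hε0 hε hρ x hx c hc δ hδ
end

section
/- Let δ > 0, ε > 0, m ≥ 1, v ∈ ℝ^m, and define P(x)_c = min_{c'} deltasel_δ(x_c, ε·x_{c'}, v_{c'} − v_c) for x ∈ ℝ₊^m, where deltasel_δ(x,y,z) equals x if z ≤ 0, (1−z/δ)x + (z/δ)y if 0 ≤ z ≤ δ, and y if z ≥ δ. If x ∈ ℝ₊^m is a fixed point of P, then for all coordinates c, c' with v_c + δ ≤ v_{c'}, it holds that x_c ≤ ε·x_{c'}. -/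
/-- The δ-approximate selection function. -/
noncomputable def deltasel (δ x y z : ℝ) : ℝ :=
  if z ≤ 0 then x
  else if z ≤ δ then (1 - z / δ) * x + (z / δ) * y
  else y

theorem deltasel_of_le {δ z : ℝ} (hδ : 0 < δ) (hz : δ ≤ z) (x y : ℝ) :
    deltasel δ x y z = y := by
  rcases hz.eq_or_lt with rfl | hlt
  · simp [deltasel, hδ.not_ge, hδ.ne']
  · simp [deltasel, (hδ.trans hlt).not_ge, hlt.not_ge]

theorem fixed_point_almost_proper_general (m : ℕ) (hm : 0 < m)
    (δ ε : ℝ) (hδ : 0 < δ) (v : Fin m → ℝ)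
    (P : (Fin m → ℝ) → Fin m → ℝ)
    (hP : ∀ (x : Fin m → ℝ) (c : Fin m),
      P x c = Finset.univ.inf'
        (Finset.univ_nonempty_iff.mpr (Fin.pos_iff_nonempty.mp hm))
        (fun c' => deltasel δ (x c) (ε * x c') (v c' - v c)))
    (x : Fin m → ℝ) (hfix : P x = x) :
    ∀ c c' : Fin m, v c + δ ≤ v c' → x c ≤ ε * x c' := by
  intro c c' hv
  calc x c = P x c := by rw [hfix]
    _ ≤ deltasel δ (x c) (ε * x c') (v c' - v c) :=
      hP x c ▸ Finset.inf'_le _ (Finset.mem_univ c')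
    _ = ε * x c' := deltasel_of_le hδ (by linarith) _ _

/-- A fixed point of the operator
`P(x)_c = min_{c'} deltasel_δ(x_c, ε·x_{c'}, v_{c'} − v_c)` on `ℝ₊^m`
satisfies the δ-almost ε-proper property with respect to `v`. -/
theorem fixed_point_almost_proper (m : ℕ) (hm : 0 < m)
    (δ ε : ℝ) (hδ : 0 < δ) (hε : 0 < ε) (v : Fin m → ℝ)
    (P : (Fin m → ℝ) → Fin m → ℝ)
    (hP : ∀ (x : Fin m → ℝ) (c : Fin m),
      P x c = Finset.univ.inf'
        (Finset.univ_nonempty_iff.mpr (Fin.pos_iff_nonempty.mp hm))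
        (fun c' => deltasel δ (x c) (ε * x c') (v c' - v c)))
    (x : Fin m → ℝ) (hx : ∀ c, 0 ≤ x c) (hfix : P x = x) :
    ∀ c c' : Fin m, v c + δ ≤ v c' → x c ≤ ε * x c' :=
  fixed_point_almost_proper_general m hm δ ε hδ v P hP x hfix
end

section
/- Fix a continuous family of valuation functions K_c : X → ℝ (c ranging over a finite index set C) on a compact metric space X of fully mixed behavior strategy profiles, and fix ε > 0, γ > 0. Suppose for every n ∈ ℕ there exists x_n ∈ X such that (x_n)_c ≤ ε·(x_n)_{c'} whenever K_c(x_n) + 1/n ≤ K_{c'}(x_n), but no point y ∈ X with y_c ≤ ε·y_{c'} whenever K_c(y) < K_{c'}(y) lies within ℓ∞-distance γ of x_n. Then a contradiction follows; i.e., for every ε > 0 and γ > 0 there exists δ > 0 such that every δ-relaxed point is within ℓ∞-distance γ of an exact point. -/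
/-!
If the statement failed for some `γ`, there would be `1/(n+1)`-almost `ε`-quasi-proper points
`xₙ` staying `γ`-far from every exact one. By compactness a subsequence converges to some
`x ∈ X`, and by continuity of the `K c` every strict inequality `K c x < K c' x` persists, with
margin exceeding `1/(n+1)`, along the tail of the subsequence; passing to the limit in
`(xₙ) c ≤ ε (xₙ) c'` shows that `x` is exactly `ε`-quasi-proper, yet it is `γ`-close to the tail.
-/

open Filter Topology

section QuasiProper

variable {C : Type*} (K : C → (C → ℝ) → ℝ) (ε : ℝ)

def IsQuasiProper (x : C → ℝ) : Prop :=
  ∀ c c' : C, K c x < K c' x → x c ≤ ε * x c'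

def IsAlmostQuasiProper (δ : ℝ) (x : C → ℝ) : Prop :=
  ∀ c c' : C, K c x + δ ≤ K c' x → x c ≤ ε * x c'

variable {K ε}

theorem IsQuasiProper.of_tendsto {ι : Type*} {l : Filter ι} [l.NeBot] {X : Set (C → ℝ)}
    {x : C → ℝ} (hK : ∀ c, ContinuousWithinAt (K c) X x) {u : ι → C → ℝ} {δ : ι → ℝ}
    (hu : Tendsto u l (𝓝[X] x)) (hδ : Tendsto δ l (𝓝 0))
    (hu_almost : ∀ i, IsAlmostQuasiProper K ε (δ i) (u i)) :
    IsQuasiProper K ε x := by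
  intro c c' hlt
  have hgap : Tendsto (fun i => K c' (u i) - K c (u i) - δ i) l (𝓝 (K c' x - K c x - 0)) :=
    (((hK c').tendsto.comp hu).sub ((hK c).tendsto.comp hu)).sub hδ
  have hgap_pos : ∀ᶠ i in l, 0 < K c' (u i) - K c (u i) - δ i :=
    hgap.eventually_const_lt (by linarith)
  have hu' : Tendsto u l (𝓝 x) := hu.mono_right nhdsWithin_le_nhds
  refine le_of_tendsto_of_tendsto ((continuous_apply c).continuousAt.tendsto.comp hu')
    (((continuous_apply c').continuousAt.tendsto.comp hu').const_mul ε) ?_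
  filter_upwards [hgap_pos] with i hi
  exact hu_almost i c c' (by linarith)

end QuasiProper

theorem almost_implies_near_general (C : Type*) [Fintype C]
    (X : Set (C → ℝ)) (hX : IsCompact X)
    (K : C → (C → ℝ) → ℝ) (hK : ∀ c, ContinuousOn (K c) X)
    (ε γ : ℝ) (hγ : 0 < γ) :
    ∃ δ : ℝ, 0 < δ ∧
      ∀ x ∈ X, (∀ c c' : C, K c x + δ ≤ K c' x → x c ≤ ε * x c') →
        ∃ y ∈ X, (∀ c c' : C, K c y < K c' y → y c ≤ ε * y c') ∧
          ∀ c : C, |x c - y c| ≤ γ := by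
  by_contra! h
  choose u hu hu_almost hu_far using fun n : ℕ => h (1 / (n + 1)) (by positivity)
  obtain ⟨x, hxX, φ, hφ, hlim⟩ := hX.tendsto_subseq hu
  have hx : IsQuasiProper K ε x :=
    .of_tendsto (fun c => hK c x hxX)
      (tendsto_nhdsWithin_iff.2 ⟨hlim, .of_forall fun n => hu (φ n)⟩)
      (tendsto_one_div_add_atTop_nhds_zero_nat.comp hφ.tendsto_atTop) (fun n => hu_almost (φ n))
  obtain ⟨n, hn⟩ := (hlim.eventually (Metric.closedBall_mem_nhds x hγ)).exists
  obtain ⟨c, hc⟩ := hu_far (φ n) x hxX hx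
  have hclose : |u (φ n) c - x c| ≤ γ :=
    (dist_le_pi_dist (u (φ n)) x c).trans (Metric.mem_closedBall.1 hn)
  exact hc.not_ge hclose

/-- Almost-implies-near: on a compact set `X ⊆ ℝ^C` of (fully mixed) strategy
profiles with continuous valuations `K_c`, for every `ε > 0` and `γ > 0` there
is a `δ > 0` such that every `δ`-almost `ε`-quasi-proper point of `X` lies
within ℓ∞-distance `γ` of an exact `ε`-quasi-proper point of `X`. -/
theorem almost_implies_near (C : Type*) [Fintype C]
    (X : Set (C → ℝ)) (hX : IsCompact X)
    (K : C → (C → ℝ) → ℝ) (hK : ∀ c, ContinuousOn (K c) X)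
    (ε γ : ℝ) (hε : 0 < ε) (hγ : 0 < γ) :
    ∃ δ : ℝ, 0 < δ ∧
      ∀ x ∈ X, (∀ c c' : C, K c x + δ ≤ K c' x → x c ≤ ε * x c') →
        ∃ y ∈ X, (∀ c c' : C, K c y < K c' y → y c ≤ ε * y c') ∧
          ∀ c : C, |x c - y c| ≤ γ :=
  almost_implies_near_general C X hX K hK ε γ hγ
end

section
/- Let c ∈ {1,...,m} and suppose x ∈ Π_ε(ρ,k,m) is written as a convex combination x = ∑_{π∈S_m} w_π π(p) of the vertices π(p) of the permutahedron of a vector p with strictly decreasing coordinates p₁ > ... > p_m satisfying pᵢ ≥ p_{i+1}/(2ε). If for distinct coordinates c, c' every permutation π with w_π > 0 has π^{-1}(c) > π^{-1}(c'), then x_c ≤ 2ε·x_{c'}. -/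
theorem Finset.sum_mul_le_mul_sum_mul_of_pos {ι R : Type*} [CommSemiring R] [PartialOrder R]
    [IsOrderedRing R] (s : Finset ι) {w f g : ι → R} {r : R} (hw : ∀ i ∈ s, 0 ≤ w i)
    (hfg : ∀ i ∈ s, 0 < w i → f i ≤ r * g i) :
    ∑ i ∈ s, w i * f i ≤ r * ∑ i ∈ s, w i * g i := by
  rw [Finset.mul_sum]
  refine Finset.sum_le_sum fun i hi => ?_
  rcases (hw i hi).eq_or_lt with hzero | hpos
  · simp [← hzero]
  · calc w i * f i ≤ w i * (r * g i) := mul_le_mul_of_nonneg_left (hfg i hi hpos) hpos.le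
      _ = r * (w i * g i) := mul_left_comm _ _ _

theorem Fin.le_mul_of_lt_of_antitone {m : ℕ} {R : Type*} [Preorder R] [Mul R] {p : Fin m → R}
    {r : R} (hp : Antitone p)
    (hstep : ∀ i : ℕ, (h : i + 1 < m) → p ⟨i + 1, h⟩ ≤ r * p ⟨i, Nat.lt_of_succ_lt h⟩)
    {i j : Fin m} (hij : i < j) : p j ≤ r * p i :=
  have hi : (i : ℕ) + 1 < m := by omega
  (hp (Fin.mk_le_of_le_val (Nat.succ_le_of_lt hij))).trans (hstep i hi)

/-- If `x` is a convex combination `∑_π w_π · π(p)` of the vertices of the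
permutahedron of a strictly decreasing vector `p` with `pᵢ ≥ p_{i+1}/(2ε)`
(vertex `π(p)` giving coordinate `c` the value `p_{π⁻¹(c)}`), and every
permutation with positive weight places `c` at a later position than `c'`
(i.e. `π⁻¹(c) > π⁻¹(c')`), then `x_c ≤ 2ε·x_{c'}`. -/
theorem convex_combination_ratio (m : ℕ) (ε : ℝ) (hε : 0 < ε)
    (p : Fin m → ℝ)
    (hdec : ∀ i j : Fin m, i < j → p j < p i)
    (hratio : ∀ i : ℕ, (h : i + 1 < m) →
      p ⟨i, by omega⟩ ≥ p ⟨i + 1, h⟩ / (2 * ε))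
    (w : Equiv.Perm (Fin m) → ℝ) (hw : ∀ π, 0 ≤ w π)
    (x : Fin m → ℝ)
    (hx : x = fun j => ∑ π : Equiv.Perm (Fin m), w π * p (π.symm j))
    (c c' : Fin m)
    (hpos : ∀ π : Equiv.Perm (Fin m), 0 < w π → π.symm c' < π.symm c) :
    x c ≤ 2 * ε * x c' := by
  have hstep (i : ℕ) (h : i + 1 < m) : p ⟨i + 1, h⟩ ≤ 2 * ε * p ⟨i, Nat.lt_of_succ_lt h⟩ :=
    ((div_le_iff₀ (by positivity)).mp (hratio i h)).trans_eq (mul_comm _ _)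
  subst hx
  exact Finset.sum_mul_le_mul_sum_mul_of_pos _ (fun π _ => hw π)
    fun π _ hπ => Fin.le_mul_of_lt_of_antitone (StrictAnti.antitone hdec) hstep (hpos π hπ)
end
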